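/- The value of the invariant c_* on the Casimir element for the Moyal product on ℝ² with the SL(2)-moment map is −(3/2)(λ/2)²: with E = (1/2)x², F = −(1/2)p², H = −x·p regarded as constant power series in PowerSeries (MvPolynomial (Fin 2) ℝ), one has E ⋆ F + (1/2) • (H ⋆ H) + F ⋆ E = −(3/8) λ² (the constant power series whose λ² coefficient is −3/8 and all other coefficients vanish). -/

import Mathlib

noncomputable section

/-- Iterated partial derivative `∂_{i 1} ⋯ ∂_{i k} u` of a multivariate polynomial. -/
def iterPDeriv {m k : ℕ} (i : Fin k → Fin m) (u : MvPolynomial (Fin m) ℝ) :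
    MvPolynomial (Fin m) ℝ :=
  (List.ofFn i).foldl (fun p t => MvPolynomial.pderiv t p) u

/-- The `k`-th Moyal bidifferential operator
`C_k(u,v) = Σ_{i,j : Fin k → Fin m} (Π_t ω (i t) (j t)) • (∂_{i} u) · (∂_{j} v)`. -/
def moyalC {m : ℕ} (ω : Fin m → Fin m → ℝ) (k : ℕ)
    (u v : MvPolynomial (Fin m) ℝ) : MvPolynomial (Fin m) ℝ :=
  ∑ i : Fin k → Fin m, ∑ j : Fin k → Fin m,
    (∏ t, ω (i t) (j t)) • (iterPDeriv i u * iterPDeriv j v)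

/-- The Moyal product of formal power series with polynomial coefficients:
`U ⋆ V = Σ_n (Σ_{a+b+k=n} (1/(2^k k!)) • C_k(u_a, v_b)) λ^n`. -/
def moyal {m : ℕ} (ω : Fin m → Fin m → ℝ)
    (U V : PowerSeries (MvPolynomial (Fin m) ℝ)) :
    PowerSeries (MvPolynomial (Fin m) ℝ) :=
  PowerSeries.mk fun n =>
    ∑ p ∈ Finset.HasAntidiagonal.antidiagonal n, ∑ q ∈ Finset.HasAntidiagonal.antidiagonal p.2,
      (1 / ((2 ^ q.2 * Nat.factorial q.2 : ℕ) : ℝ)) •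
        moyalC ω q.2 (PowerSeries.coeff p.1 U) (PowerSeries.coeff q.1 V)

/-- The standard symplectic matrix on `ℝ²`: `ω 0 1 = 1`, `ω 1 0 = -1`. -/
def ωstd : Fin 2 → Fin 2 → ℝ := ![![0, 1], ![-1, 0]]

/-- `E = (1/2) x²` where `x = X 0`. -/
def Epoly : MvPolynomial (Fin 2) ℝ := (1 / 2 : ℝ) • (MvPolynomial.X 0 ^ 2)

/-- `F = -(1/2) p²` where `p = X 1`. -/
def Fpoly : MvPolynomial (Fin 2) ℝ := -((1 / 2 : ℝ) • (MvPolynomial.X 1 ^ 2))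

/-- `H = -x·p`. -/
def Hpoly : MvPolynomial (Fin 2) ℝ := -(MvPolynomial.X 0 * MvPolynomial.X 1)

open MvPolynomial

/- ### Auxiliary lemmas -/

lemma foldl_pderiv_zero {m : ℕ} (l : List (Fin m)) :
    l.foldl (fun p t => MvPolynomial.pderiv t p) (0 : MvPolynomial (Fin m) ℝ) = 0 := by
  induction l with
  | nil => rfl
  | cons a l ih => simp [List.foldl_cons, ih]

lemma iterPDeriv_zero {m k : ℕ} (i : Fin k → Fin m) :
    iterPDeriv i (0 : MvPolynomial (Fin m) ℝ) = 0 :=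
  foldl_pderiv_zero _

lemma iterPDeriv_big {m k : ℕ} (u : MvPolynomial (Fin m) ℝ)
    (hu : ∀ a b c : Fin m, pderiv c (pderiv b (pderiv a u)) = 0)
    (hk : 3 ≤ k) (i : Fin k → Fin m) : iterPDeriv i u = 0 := by
  unfold iterPDeriv
  have hl : 3 ≤ (List.ofFn i).length := by simpa using hk
  generalize (List.ofFn i) = l at hl ⊢
  rcases l with _ | ⟨a, _ | ⟨b, _ | ⟨c, l⟩⟩⟩ <;>
    simp only [List.length_nil, List.length_cons] at hl
  · omega
  · omega
  · omega
  · simp only [List.foldl_cons, hu a b c]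
    exact foldl_pderiv_zero l

lemma moyalC_zero_left {m : ℕ} (ω : Fin m → Fin m → ℝ) (k : ℕ) (v : MvPolynomial (Fin m) ℝ) :
    moyalC ω k 0 v = 0 := by simp [moyalC, iterPDeriv_zero]

lemma moyalC_zero_right {m : ℕ} (ω : Fin m → Fin m → ℝ) (k : ℕ) (u : MvPolynomial (Fin m) ℝ) :
    moyalC ω k u 0 = 0 := by simp [moyalC, iterPDeriv_zero]

lemma moyalC_big {m k : ℕ} (ω : Fin m → Fin m → ℝ) (u v : MvPolynomial (Fin m) ℝ)
    (hu : ∀ a b c : Fin m, pderiv c (pderiv b (pderiv a u)) = 0)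
    (hk : 3 ≤ k) : moyalC ω k u v = 0 := by
  simp [moyalC, fun i => iterPDeriv_big u hu hk i]

lemma moyal_coeff_C_C {m : ℕ} (ω : Fin m → Fin m → ℝ) (u v : MvPolynomial (Fin m) ℝ) (n : ℕ) :
    PowerSeries.coeff n (moyal ω (PowerSeries.C u) (PowerSeries.C v)) =
      (1 / ((2 ^ n * Nat.factorial n : ℕ) : ℝ)) • moyalC ω n u v := by
  rw [moyal, PowerSeries.coeff_mk]
  rw [Finset.sum_eq_single (0, n)]
  · rw [Finset.sum_eq_single (0, n)]
    · simp
    · rintro ⟨a, b⟩ hq hne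
      simp only [Finset.mem_antidiagonal] at hq
      have : a ≠ 0 := by rintro rfl; simp at hq; exact hne (by simp [hq])
      simp [PowerSeries.coeff_C, this, moyalC_zero_right]
    · intro h; simp at h
  · rintro ⟨a, b⟩ hp hne
    simp only [Finset.HasAntidiagonal.mem_antidiagonal] at hp
    have : a ≠ 0 := by rintro rfl; simp at hp; exact hne (by simp [hp])
    simp [PowerSeries.coeff_C, this, moyalC_zero_left]
  · intro h; simp at h

lemma moyalC_zero' {m : ℕ} (ω : Fin m → Fin m → ℝ) (u v : MvPolynomial (Fin m) ℝ) :
    moyalC ω 0 u v = u * v := by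
  simp [moyalC, iterPDeriv, List.ofFn_zero]

lemma moyalC_one {m : ℕ} (ω : Fin m → Fin m → ℝ) (u v : MvPolynomial (Fin m) ℝ) :
    moyalC ω 1 u v = ∑ a : Fin m, ∑ b : Fin m,
      ω a b • (pderiv a u * pderiv b v) := by
  rw [moyalC]
  rw [← (Equiv.funUnique (Fin 1) (Fin m)).symm.sum_comp]
  refine Finset.sum_congr rfl fun a _ => ?_
  rw [← (Equiv.funUnique (Fin 1) (Fin m)).symm.sum_comp]
  refine Finset.sum_congr rfl fun b _ => ?_
  simp [iterPDeriv, Equiv.funUnique, List.ofFn_succ]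

lemma moyalC_two {m : ℕ} (ω : Fin m → Fin m → ℝ) (u v : MvPolynomial (Fin m) ℝ) :
    moyalC ω 2 u v = ∑ a1 : Fin m, ∑ a2 : Fin m, ∑ b1 : Fin m, ∑ b2 : Fin m,
      (ω a1 b1 * ω a2 b2) • (pderiv a2 (pderiv a1 u) * pderiv b2 (pderiv b1 v)) := by
  rw [moyalC]
  rw [← (piFinTwoEquiv (fun _ => Fin m)).symm.sum_comp, Fintype.sum_prod_type]
  refine Finset.sum_congr rfl fun a1 _ => Finset.sum_congr rfl fun a2 _ => ?_
  rw [← (piFinTwoEquiv (fun _ => Fin m)).symm.sum_comp, Fintype.sum_prod_type]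
  refine Finset.sum_congr rfl fun b1 _ => Finset.sum_congr rfl fun b2 _ => ?_
  simp [iterPDeriv, piFinTwoEquiv, List.ofFn_succ, Fin.prod_univ_two]

lemma half2 : (C (1/2 : ℝ) : MvPolynomial (Fin 2) ℝ) * 2 = 1 := by
  rw [← map_ofNat C 2, ← map_mul]; norm_num

lemma half_sq : (C (1/2 : ℝ) : MvPolynomial (Fin 2) ℝ) ^ 2 * 2 = C (1/2) := by
  rw [← map_pow, ← map_ofNat C 2, ← map_mul]; norm_num

lemma pdE0 : pderiv 0 Epoly = X 0 := by
  rw [Epoly, pow_two, smul_eq_C_mul, pderiv_mul, pderiv_mul, pderiv_C]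
  simp only [pderiv_X_self]
  linear_combination (X 0 : MvPolynomial (Fin 2) ℝ) * half2
lemma pdE1 : pderiv 1 Epoly = 0 := by
  rw [Epoly, pow_two, smul_eq_C_mul, pderiv_mul, pderiv_mul, pderiv_C]
  rw [pderiv_X_of_ne (by decide)]
  ring
lemma pdF0 : pderiv 0 Fpoly = 0 := by
  rw [Fpoly, smul_eq_C_mul, pow_two, map_neg, pderiv_mul, pderiv_mul, pderiv_C]
  rw [pderiv_X_of_ne (by decide)]
  ring
lemma pdF1 : pderiv 1 Fpoly = -X 1 := by
  rw [Fpoly, smul_eq_C_mul, pow_two, map_neg, pderiv_mul, pderiv_mul, pderiv_C]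
  simp only [pderiv_X_self]
  linear_combination (-(X 1) : MvPolynomial (Fin 2) ℝ) * half2
lemma pdH0 : pderiv 0 Hpoly = -X 1 := by
  rw [Hpoly, map_neg, pderiv_mul, pderiv_X_self, pderiv_X_of_ne (by decide)]
  ring
lemma pdH1 : pderiv 1 Hpoly = -X 0 := by
  rw [Hpoly, map_neg, pderiv_mul, pderiv_X_self, pderiv_X_of_ne (by decide)]
  ring

lemma hE3 : ∀ a b c : Fin 2, pderiv c (pderiv b (pderiv a Epoly)) = 0 := by
  intro a b c
  fin_cases a <;> fin_cases b <;>
    simp [pdE0, pdE1, pderiv_X_self, pderiv_X_of_ne, pderiv_one]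
lemma hF3 : ∀ a b c : Fin 2, pderiv c (pderiv b (pderiv a Fpoly)) = 0 := by
  intro a b c
  fin_cases a <;> fin_cases b <;>
    simp [pdF0, pdF1, pderiv_X_self, pderiv_X_of_ne, pderiv_one]
lemma hH3 : ∀ a b c : Fin 2, pderiv c (pderiv b (pderiv a Hpoly)) = 0 := by
  intro a b c
  fin_cases a <;> fin_cases b <;>
    simp [pdH0, pdH1, pderiv_X_self, pderiv_X_of_ne, pderiv_one]

/-- The value of the invariant `c_*` on the Casimir element
`Z = EF + (1/2)H² + FE` for the Moyal product on `ℝ²`: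
`E ⋆ F + (1/2) • (H ⋆ H) + F ⋆ E = -(3/8) λ² = -(3/2)(λ/2)²`. -/
theorem sl2_casimir_value :
    moyal ωstd (PowerSeries.C Epoly) (PowerSeries.C Fpoly)
      + (1 / 2 : ℝ) • moyal ωstd (PowerSeries.C Hpoly) (PowerSeries.C Hpoly)
      + moyal ωstd (PowerSeries.C Fpoly) (PowerSeries.C Epoly)
    = (-(3 / 8) : ℝ) • (PowerSeries.X ^ 2 :
        PowerSeries (MvPolynomial (Fin 2) ℝ)) := by
  refine PowerSeries.ext fun n => ?_
  simp only [map_add, PowerSeries.coeff_smul, moyal_coeff_C_C, PowerSeries.coeff_X_pow]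
  rcases n with _ | _ | _ | n
  · -- n = 0
    simp only [pow_zero, Nat.factorial_zero, mul_one, Nat.cast_one, div_one, one_smul,
      moyalC_zero', if_neg (by decide : ¬(0 = 2)), smul_zero]
    simp only [Epoly, Fpoly, Hpoly, smul_eq_C_mul]
    linear_combination -(X 1 ^ 2 * X 0 ^ 2 : MvPolynomial (Fin 2) ℝ) * half_sq
  · -- n = 1
    simp only [zero_add, Nat.reduceAdd]
    simp only [moyalC_one, Fin.sum_univ_two, pdE0, pdE1, pdF0, pdF1, pdH0, pdH1,
      if_neg (by decide : ¬(1 = 2)), smul_zero, ωstd]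
    simp only [Matrix.cons_val_zero, Matrix.cons_val_one, Matrix.head_cons, smul_eq_C_mul]
    push_cast
    norm_num
    ring
  · -- n = 2
    simp only [zero_add, Nat.reduceAdd]
    simp only [moyalC_two, Fin.sum_univ_two, pdE0, pdE1, pdF0, pdF1, pdH0, pdH1,
      if_pos rfl, ωstd]
    simp only [map_zero, map_neg, pderiv_X_self,
      pderiv_X_of_ne (show (0:Fin 2) ≠ 1 by decide),
      pderiv_X_of_ne (show (1:Fin 2) ≠ 0 by decide)]
    simp only [Matrix.cons_val_zero, Matrix.cons_val_one, Matrix.head_cons, smul_eq_C_mul]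
    push_cast
    norm_num
    rw [show ((2:MvPolynomial (Fin 2) ℝ)) = C (2:ℝ) from (map_ofNat C 2).symm]
    simp only [← map_mul, ← map_neg, ← map_add]
    norm_num
  · -- n ≥ 3
    rw [moyalC_big _ _ _ hE3 (by omega), moyalC_big _ _ _ hH3 (by omega),
      moyalC_big _ _ _ hF3 (by omega)]
    simp
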